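/- arXiv:math/0511343 — 4 statements merged into one kernel-verified Lean document; each statement's English description precedes it below -/
import Mathlib

section
/- Let C_{T_I,k} be the number of pairings of dn elements (n cells of size d) with exactly k pairs inside a fixed union T_I of t cells. Then |C_{T_I,k}| = C(dt, 2k) · (2k)!/(k! 2^k) · C(dn - dt, dt - 2k) · (dt - 2k)! · (dn - 2dt + 2k)! / ((dn/2 - dt + k)! · 2^{dn/2 - dt + k}) for all k with max{0, dt - dn/2} ≤ k ≤ dt/2. -/
open Finset

/-- A pairing (perfect matching) of a finite set: a fixed-point-free involution. -/
def IsPairing {α : Type*} (f : Equiv.Perm α) : Prop :=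
  (∀ x, f x ≠ x) ∧ ∀ x, f (f x) = x

instance {α : Type*} [Fintype α] [DecidableEq α] :
    DecidablePred (fun f : Equiv.Perm α => IsPairing f) := fun f => by
  unfold IsPairing; infer_instance

/-- The union `T_I` of the cells indexed by `I` in the configuration model:
the `d*n` elements are split into `n` cells of size `d`, element `x`
belonging to cell `x / d`. -/
def TI (d n : ℕ) (I : Finset (Fin n)) : Finset (Fin (d * n)) :=
  Finset.univ.filter (fun x => ∃ i ∈ I, x.val / d = i.val)

/-- The number of elements `x ∈ T_I` whose partner also lies in `T_I`;
this is exactly twice the number of pairs lying inside `T_I`. -/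
def inCount (d n : ℕ) (I : Finset (Fin n)) (f : Equiv.Perm (Fin (d * n))) : ℕ :=
  (Finset.univ.filter (fun x => x ∈ TI d n I ∧ f x ∈ TI d n I)).card

/-- The number of pairs with one element in `T_I` and the other in `T_J`
(for disjoint `I`, `J`): count elements of `T_I` whose partner is in `T_J`. -/
def crossCount (d n : ℕ) (I J : Finset (Fin n)) (f : Equiv.Perm (Fin (d * n))) : ℕ :=
  (Finset.univ.filter (fun x => x ∈ TI d n I ∧ f x ∈ TI d n J)).card



section Pairings
variable {α : Type*} [Fintype α] [DecidableEq α]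

def PairingOn (s : Finset α) (f : α → α) : Prop :=
  (∀ x ∈ s, f x ∈ s ∧ f x ≠ x ∧ f (f x) = x) ∧ ∀ x ∉ s, f x = x

lemma nat_card_sigma {ι : Type*} [Fintype ι] (F : ι → Type*) [∀ i, Fintype (F i)] :
    Nat.card (Σ i, F i) = ∑ i, Nat.card (F i) := by
  simp [Nat.card_eq_fintype_card, Fintype.card_sigma]

lemma card_pairingOn_mul (m : ℕ) : ∀ (s : Finset α), s.card = 2 * m →
    Nat.card {f : α → α // PairingOn s f} * (m.factorial * 2 ^ m) = (2 * m).factorial := by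
  classical
  induction m with
  | zero =>
    intro s hs
    have hse : s = ∅ := Finset.card_eq_zero.mp (by simpa using hs)
    subst hse
    have : Unique {f : α → α // PairingOn (∅ : Finset α) f} := by
      refine ⟨⟨⟨id, ⟨by simp, fun x _ => rfl⟩⟩⟩, ?_⟩
      rintro ⟨f, hf⟩
      exact Subtype.ext (funext fun x => hf.2 x (by simp))
    simp [Nat.card_unique]
  | succ m ih =>
    intro s hs
    have hpos : 0 < s.card := by omega
    obtain ⟨a, ha⟩ := Finset.card_pos.mp hpos
    set T := {f : α → α // PairingOn s f} with hT
    have φprop : ∀ f : T, f.1 a ∈ s.erase a := by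
      rintro ⟨f, hf⟩
      exact Finset.mem_erase.mpr ⟨(hf.1 a ha).2.1, (hf.1 a ha).1⟩
    let φ : T → ↥(s.erase a) := fun f => ⟨f.1 a, φprop f⟩
    have hcongr := Nat.card_congr (Equiv.sigmaFiberEquiv φ)
    have fibEquiv : ∀ b : ↥(s.erase a),
        {f : T // φ f = b} ≃ {g : α → α // PairingOn ((s.erase a).erase b.1) g} := by
      rintro ⟨b, hb⟩
      have hbs : b ∈ s := Finset.mem_of_mem_erase hb
      have hba : b ≠ a := (Finset.mem_erase.mp hb).1
      set t := (s.erase a).erase b with htdef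
      have hmemt : ∀ x, x ∈ t ↔ x ∈ s ∧ x ≠ a ∧ x ≠ b := by
        intro x
        simp [htdef, Finset.mem_erase]; tauto
      have hat : a ∉ t := by simp [hmemt]
      have hbt : b ∉ t := by simp [hmemt]
      -- forward map
      let toG : (α → α) → (α → α) := fun f x => if x = a ∨ x = b then x else f x
      have toG_eq : ∀ f x, x ≠ a → x ≠ b → toG f x = f x := by
        intro f x h1 h2; simp only [toG, if_neg (by tauto : ¬(x = a ∨ x = b))]
      have toG_prop : ∀ (f : α → α), PairingOn s f → f a = b → PairingOn t (toG f) := by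
        intro f hf hfa'
        constructor
        · intro x hx
          obtain ⟨hxs, hxa, hxb⟩ := (hmemt x).mp hx
          have h1 := hf.1 x hxs
          have hfxa : f x ≠ a := by
            intro h
            apply hxb
            rw [← h1.2.2, h, hfa']
          have hfxb : f x ≠ b := by
            intro h
            apply hxa
            rw [← h1.2.2, h, ← hfa', (hf.1 a ha).2.2]
          rw [toG_eq f x hxa hxb]
          refine ⟨(hmemt (f x)).mpr ⟨h1.1, hfxa, hfxb⟩, h1.2.1, ?_⟩
          rw [toG_eq f (f x) hfxa hfxb]
          exact h1.2.2
        · intro x hx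
          by_cases h : x = a ∨ x = b
          · simp only [toG, if_pos h]
          · have hxs : x ∉ s := fun hxs => hx ((hmemt x).mpr ⟨hxs, by tauto, by tauto⟩)
            rw [toG_eq f x (by tauto) (by tauto)]
            exact hf.2 x hxs
      -- backward map
      let fromG : (α → α) → (α → α) := fun g x => if x = a then b else if x = b then a else g x
      have fromG_a : ∀ g, fromG g a = b := fun g => by simp [fromG]
      have fromG_b : ∀ g, fromG g b = a := fun g => by simp [fromG, hba]
      have fromG_eq : ∀ g x, x ≠ a → x ≠ b → fromG g x = g x := by
        intro g x h1 h2; simp only [fromG, if_neg h1, if_neg h2]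
      have fromG_prop : ∀ (g : α → α), PairingOn t g → PairingOn s (fromG g) := by
        intro g hg
        constructor
        · intro x hxs
          by_cases hxa : x = a
          · rw [hxa, fromG_a]
            exact ⟨hbs, hba, by rw [fromG_b]⟩
          · by_cases hxb : x = b
            · rw [hxb, fromG_b]
              exact ⟨ha, hba.symm, by rw [fromG_a]⟩
            · rw [fromG_eq g x hxa hxb]
              have h1 := hg.1 x ((hmemt x).mpr ⟨hxs, hxa, hxb⟩)
              obtain ⟨h1t, h1ne, h1inv⟩ := h1
              obtain ⟨h1s, h1a, h1b⟩ := (hmemt (g x)).mp h1t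
              exact ⟨h1s, h1ne, by rw [fromG_eq g (g x) h1a h1b]; exact h1inv⟩
        · intro x hxs
          have hxa : x ≠ a := fun h => hxs (h ▸ ha)
          have hxb : x ≠ b := fun h => hxs (h ▸ hbs)
          rw [fromG_eq g x hxa hxb]
          exact hg.2 x (fun h => hxs ((hmemt x).mp h).1)
      refine ⟨fun p => ⟨toG p.1.1, toG_prop p.1.1 p.1.2 (congrArg Subtype.val p.2)⟩,
        fun g => ⟨⟨fromG g.1, fromG_prop g.1 g.2⟩, Subtype.ext (fromG_a g.1)⟩, ?_, ?_⟩
      · rintro ⟨⟨f, hf⟩, hfa⟩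
        have hfa' : f a = b := congrArg Subtype.val hfa
        apply Subtype.ext
        apply Subtype.ext
        funext x
        show fromG (toG f) x = f x
        by_cases hxa : x = a
        · rw [hxa, fromG_a, hfa']
        · by_cases hxb : x = b
          · rw [hxb, fromG_b, ← hfa', (hf.1 a ha).2.2]
          · rw [fromG_eq _ x hxa hxb, toG_eq f x hxa hxb]
      · rintro ⟨g, hg⟩
        apply Subtype.ext
        funext x
        show toG (fromG g) x = g x
        by_cases h : x = a ∨ x = b
        · simp only [toG, if_pos h]
          rcases h with h | h
        



          · rw [h, hg.2 a hat]
          · rw [h, hg.2 b hbt]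
        · rw [toG_eq _ x (by tauto) (by tauto), fromG_eq g x (by tauto) (by tauto)]
    have hce : (s.erase a).card = 2 * m + 1 := by
      rw [Finset.card_erase_of_mem ha]; omega
    have hcard2 : ∀ b : ↥(s.erase a), ((s.erase a).erase b.1).card = 2 * m := by
      rintro ⟨b, hb⟩
      rw [Finset.card_erase_of_mem hb, hce]
      omega
    have key : ∀ b : ↥(s.erase a),
        Nat.card {f : T // φ f = b} * (m.factorial * 2 ^ m) = (2 * m).factorial := by
      intro b
      rw [Nat.card_congr (fibEquiv b)]
      exact ih _ (hcard2 b)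
    have hsum : Nat.card T = ∑ b : ↥(s.erase a), Nat.card {f : T // φ f = b} := by
      rw [← hcongr, nat_card_sigma]
    have hmain : Nat.card T * (m.factorial * 2 ^ m) = (2 * m + 1) * (2 * m).factorial := by
      rw [hsum, Finset.sum_mul]
      rw [Finset.sum_congr rfl (fun b _ => key b), Finset.sum_const, Finset.card_univ,
        Fintype.card_coe, hce, smul_eq_mul]
    have step1 : Nat.card T * ((m + 1).factorial * 2 ^ (m + 1)) =
        Nat.card T * (m.factorial * 2 ^ m) * ((m + 1) * 2) := by
      rw [Nat.factorial_succ]; ring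
    have step2 : (2 * (m + 1)).factorial = ((2 * m + 1) + 1) * ((2 * m + 1) * (2 * m).factorial) := by
      rw [show 2 * (m + 1) = (2 * m + 1) + 1 from by ring, Nat.factorial_succ, Nat.factorial_succ]
    rw [step1, hmain, step2]
    ring

lemma card_pairingOn (m : ℕ) (s : Finset α) (hs : s.card = 2 * m) :
    Nat.card {f : α → α // PairingOn s f} = (2 * m).factorial / (m.factorial * 2 ^ m) := by
  have h := card_pairingOn_mul m s hs
  have hpos : 0 < m.factorial * 2 ^ m := by positivity
  exact (Nat.div_eq_of_eq_mul_left hpos h.symm).symm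

end Pairings


section Pairings2
variable {α : Type*} [Fintype α] [DecidableEq α]

def restrictPairing (s : Finset α) (f : α → α) : α → α := fun x => if x ∈ s then f x else x

omit [Fintype α] in
lemma pair_restrict (s : Finset α) (f : α → α) (hmap : ∀ x ∈ s, f x ∈ s)
    (hne : ∀ x ∈ s, f x ≠ x) (hinv : ∀ x ∈ s, f (f x) = x) :
    PairingOn s (restrictPairing s f) := by
  constructor
  · intro x hx
    have h1 : restrictPairing s f x = f x := if_pos hx
    have h2 : restrictPairing s f (f x) = f (f x) := if_pos (hmap x hx)
    rw [h1]
    exact ⟨hmap x hx, hne x hx, by rw [h2]; exact hinv x hx⟩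
  · intro x hx
    exact if_neg hx

section Decomp
variable (S A B : Finset α) (f : α → α)

omit [Fintype α] in
lemma mapsA (hf2 : Function.Involutive f) (hfS : S.filter (fun x => f x ∈ S) = A) :
    ∀ x ∈ A, f x ∈ A := by
  subst hfS
  intro x hx
  simp only [Finset.mem_filter] at *
  exact ⟨hx.2, by rw [hf2 x]; exact hx.1⟩

lemma mapsSA (hf2 : Function.Involutive f) (hfS : S.filter (fun x => f x ∈ S) = A)
    (hfB : Sᶜ.filter (fun x => f x ∈ S) = B) : ∀ x ∈ S \ A, f x ∈ B := by
  subst hfS; subst hfB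
  intro x hx
  simp only [Finset.mem_sdiff, Finset.mem_filter, Finset.mem_compl, not_and] at *
  exact ⟨fun h => hx.2 hx.1 h, by rw [hf2 x]; exact hx.1⟩

lemma mapsB (hf2 : Function.Involutive f) (hfS : S.filter (fun x => f x ∈ S) = A)
    (hfB : Sᶜ.filter (fun x => f x ∈ S) = B) : ∀ y ∈ B, f y ∈ S \ A := by
  subst hfS; subst hfB
  intro y hy
  simp only [Finset.mem_sdiff, Finset.mem_filter, Finset.mem_compl, not_and] at *
  exact ⟨hy.2, fun h1 h2 => hy.1 (by rw [← hf2 y]; exact h2)⟩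

lemma mapsC (hf2 : Function.Involutive f) (hfB : Sᶜ.filter (fun x => f x ∈ S) = B) :
    ∀ x ∈ Sᶜ \ B, f x ∈ Sᶜ \ B := by
  subst hfB
  intro x hx
  simp only [Finset.mem_sdiff, Finset.mem_filter, Finset.mem_compl, not_and] at *
  have hfxS : f x ∉ S := fun h => hx.2 hx.1 h
  exact ⟨hfxS, fun h1 h2 => hx.1 (by rw [← hf2 x]; exact h2)⟩

end Decomp

def crossEquiv (U V : Finset α) (f : α → α) (hinv : Function.Involutive f)
    (h1 : ∀ x ∈ U, f x ∈ V) (h2 : ∀ y ∈ V, f y ∈ U) : ↥U ≃ ↥V where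
  toFun x := ⟨f x, h1 x x.2⟩
  invFun y := ⟨f y, h2 y y.2⟩
  left_inv x := Subtype.ext (hinv x)
  right_inv y := Subtype.ext (hinv y)

def glue (S A B : Finset α) (fA : α → α) (g : ↥(S \ A) ≃ ↥B) (fC : α → α) : α → α :=
  fun x => if x ∈ A then fA x
    else if hx : x ∈ S \ A then (g ⟨x, hx⟩ : α)
    else if hx : x ∈ B then (g.symm ⟨x, hx⟩ : α)
    else fC x

section Glue
variable (S A B : Finset α) (fA : α → α) (g : ↥(S \ A) ≃ ↥B) (fC : α → α)
variable (hA : A ⊆ S) (hB : B ⊆ Sᶜ)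

omit [Fintype α] in
lemma glue_A {x : α} (hx : x ∈ A) : glue S A B fA g fC x = fA x := if_pos hx

omit [Fintype α] in
lemma glue_SA {x : α} (hx : x ∈ S \ A) : glue S A B fA g fC x = g ⟨x, hx⟩ := by
  have h1 : x ∉ A := (Finset.mem_sdiff.mp hx).2
  rw [glue, if_neg h1, dif_pos hx]

include hA hB in
lemma glue_B {x : α} (hx : x ∈ B) : glue S A B fA g fC x = g.symm ⟨x, hx⟩ := by
  have hxS : x ∉ S := Finset.mem_compl.mp (hB hx)
  have h1 : x ∉ A := fun h => hxS (hA h)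
  have h2 : x ∉ S \ A := fun h => hxS (Finset.mem_sdiff.mp h).1
  rw [glue, if_neg h1, dif_neg h2, dif_pos hx]

include hA in
lemma glue_C {x : α} (hx : x ∈ Sᶜ \ B) : glue S A B fA g fC x = fC x := by
  rw [Finset.mem_sdiff, Finset.mem_compl] at hx
  have h1 : x ∉ A := fun h => hx.1 (hA h)
  have h2 : x ∉ S \ A := fun h => hx.1 (Finset.mem_sdiff.mp h).1
  rw [glue, if_neg h1, dif_neg h2, dif_neg hx.2]

end Glue

def fiberEquiv (S A B : Finset α) (hA : A ⊆ S) (hB : B ⊆ Sᶜ) :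
    {f : α → α // ((∀ x, f x ≠ x) ∧ Function.Involutive f) ∧
      S.filter (fun x => f x ∈ S) = A ∧ Sᶜ.filter (fun x => f x ∈ S) = B} ≃
    ({fA : α → α // PairingOn A fA} ×
      ((↥(S \ A) ≃ ↥B) × {fC : α → α // PairingOn (Sᶜ \ B) fC})) where
  toFun p :=
    ⟨⟨restrictPairing A p.1,
        pair_restrict A p.1 (mapsA S A p.1 p.2.1.2 p.2.2.1)
          (fun x _ => p.2.1.1 x) (fun x _ => p.2.1.2 x)⟩,
     crossEquiv (S \ A) B p.1 p.2.1.2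
        (mapsSA S A B p.1 p.2.1.2 p.2.2.1 p.2.2.2)
        (mapsB S A B p.1 p.2.1.2 p.2.2.1 p.2.2.2),
     ⟨restrictPairing (Sᶜ \ B) p.1,
        pair_restrict (Sᶜ \ B) p.1 (mapsC S B p.1 p.2.1.2 p.2.2.2)
          (fun x _ => p.2.1.1 x) (fun x _ => p.2.1.2 x)⟩⟩
  invFun q := by
    obtain ⟨⟨fA, hfA⟩, g, fC, hfC⟩ := q
    refine ⟨glue S A B fA g fC, ?_⟩
    have regions : ∀ x : α, x ∈ A ∨ x ∈ S \ A ∨ x ∈ B ∨ x ∈ Sᶜ \ B := by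
      intro x
      by_cases hS : x ∈ S
      · by_cases hA' : x ∈ A
        · exact Or.inl hA'
        · exact Or.inr (Or.inl (Finset.mem_sdiff.mpr ⟨hS, hA'⟩))
      · by_cases hB' : x ∈ B
        · exact Or.inr (Or.inr (Or.inl hB'))
        · exact Or.inr (Or.inr (Or.inr (Finset.mem_sdiff.mpr ⟨Finset.mem_compl.mpr hS, hB'⟩)))
    have valA : ∀ x ∈ A, glue S A B fA g fC x ∈ A ∧ glue S A B fA g fC x ≠ x ∧
        glue S A B fA g fC (glue S A B fA g fC x) = x := by
      intro x hx
      obtain ⟨hm, hne, hi⟩ := hfA.1 x hx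
      rw [glue_A S A B fA g fC hx]
      exact ⟨hm, hne, by rw [glue_A S A B fA g fC hm]; exact hi⟩
    have valSA : ∀ x (hx : x ∈ S \ A), glue S A B fA g fC x ∈ B ∧ glue S A B fA g fC x ≠ x ∧
        glue S A B fA g fC (glue S A B fA g fC x) = x := by
      intro x hx
      have h1 : glue S A B fA g fC x = g ⟨x, hx⟩ := glue_SA S A B fA g fC hx
      have hmem : (g ⟨x, hx⟩ : α) ∈ B := (g ⟨x, hx⟩).2
      rw [h1]
      refine ⟨hmem, ?_, ?_⟩
      · intro h
        have hxS : x ∈ S := (Finset.mem_sdiff.mp hx).1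
        have hno : (g ⟨x, hx⟩ : α) ∉ S := Finset.mem_compl.mp (hB hmem)
        exact hno (by rw [h]; exact hxS)
      · rw [glue_B S A B fA g fC hA hB hmem]
        have he : (⟨(g ⟨x, hx⟩ : α), hmem⟩ : ↥B) = g ⟨x, hx⟩ := Subtype.ext rfl
        rw [he, Equiv.symm_apply_apply]
    have valB : ∀ x (hx : x ∈ B), glue S A B fA g fC x ∈ S \ A ∧ glue S A B fA g fC x ≠ x ∧
        glue S A B fA g fC (glue S A B fA g fC x) = x := by
      intro x hx
      have h1 : glue S A B fA g fC x = g.symm ⟨x, hx⟩ := glue_B S A B fA g fC hA hB hx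
      have hmem : (g.symm ⟨x, hx⟩ : α) ∈ S \ A := (g.symm ⟨x, hx⟩).2
      rw [h1]
      refine ⟨hmem, ?_, ?_⟩
      · intro h
        have hxS : x ∉ S := Finset.mem_compl.mp (hB hx)
        exact hxS (by rw [← h]; exact (Finset.mem_sdiff.mp hmem).1)
      · rw [glue_SA S A B fA g fC hmem]
        have he : (⟨(g.symm ⟨x, hx⟩ : α), hmem⟩ : ↥(S \ A)) = g.symm ⟨x, hx⟩ := Subtype.ext rfl
        rw [he, Equiv.apply_symm_apply]
    have valC : ∀ x (hx : x ∈ Sᶜ \ B), glue S A B fA g fC x ∈ Sᶜ \ B ∧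
        glue S A B fA g fC x ≠ x ∧ glue S A B fA g fC (glue S A B fA g fC x) = x := by
      intro x hx
      obtain ⟨hm, hne, hi⟩ := hfC.1 x hx
      rw [glue_C S A B fA g fC hA hx]
      exact ⟨hm, hne, by rw [glue_C S A B fA g fC hA hm]; exact hi⟩
    refine ⟨⟨?_, ?_⟩, ?_, ?_⟩
    · intro x
      rcases regions x with hx | hx | hx | hx
      · exact (valA x hx).2.1
      · exact (valSA x hx).2.1
      · exact (valB x hx).2.1
      · exact (valC x hx).2.1
    · intro x
      rcases regions x with hx | hx | hx | hx
      · exact (valA x hx).2.2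
      · exact (valSA x hx).2.2
      · exact (valB x hx).2.2
      · exact (valC x hx).2.2
    · ext x
      rw [Finset.mem_filter]
      constructor
      · rintro ⟨hxS, hFx⟩
        by_cases hA' : x ∈ A
        · exact hA'
        · exfalso
          have hx : x ∈ S \ A := Finset.mem_sdiff.mpr ⟨hxS, hA'⟩
          exact (Finset.mem_compl.mp (hB (valSA x hx).1)) hFx
      · intro hx
        exact ⟨hA hx, hA ((valA x hx).1)⟩
    · ext x
      rw [Finset.mem_filter]
      constructor
      · rintro ⟨hxC, hFx⟩
        by_cases hB' : x ∈ B
        · exact hB'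
        · exfalso
          have hx : x ∈ Sᶜ \ B := Finset.mem_sdiff.mpr ⟨hxC, hB'⟩
          exact (Finset.mem_compl.mp (Finset.mem_sdiff.mp (valC x hx).1).1) hFx
      · intro hx
        exact ⟨hB hx, (Finset.mem_sdiff.mp (valB x hx).1).1⟩
  left_inv p := by
    obtain ⟨f, ⟨hf1, hf2⟩, hfS, hfB⟩ := p
    apply Subtype.ext
    funext x
    show glue S A B _ _ _ x = f x
    by_cases hA' : x ∈ A
    · rw [glue_A S A B _ _ _ hA']
      exact if_pos hA'
    · by_cases hSA : x ∈ S \ A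
      · rw [glue_SA S A B _ _ _ hSA]; rfl
      · by_cases hB' : x ∈ B
        · rw [glue_B S A B _ _ _ hA hB hB']; rfl
        · have hxC : x ∈ Sᶜ \ B := by
            rw [Finset.mem_sdiff, Finset.mem_compl]
            exact ⟨fun h => hSA (Finset.mem_sdiff.mpr ⟨h, hA'⟩), hB'⟩
          rw [glue_C S A B _ _ _ hA hxC]
          exact if_pos hxC
  right_inv q := by
    obtain ⟨⟨fA, hfA⟩, g, fC, hfC⟩ := q
    refine Prod.ext ?_ (Prod.ext ?_ ?_)
    · apply Subtype.ext
      funext x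
      show (if x ∈ A then glue S A B fA g fC x else x) = fA x
      by_cases hx : x ∈ A
      · rw [if_pos hx, glue_A S A B fA g fC hx]
      · rw [if_neg hx, hfA.2 x hx]
    · apply Equiv.ext
      intro x
      apply Subtype.ext
      show glue S A B fA g fC x.1 = (g x : α)
      exact glue_SA S A B fA g fC x.2
    · apply Subtype.ext
      funext x
      show (if x ∈ Sᶜ \ B then glue S A B fA g fC x else x) = fC x
      by_cases hx : x ∈ Sᶜ \ B
      · rw [if_pos hx, glue_C S A B fA g fC hA hx]
      · rw [if_neg hx, hfC.2 x hx]
end Pairings2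

section Pairings3
variable {α : Type*} [Fintype α] [DecidableEq α]

-- now the real part 3

lemma crossCard (S : Finset α) (f : α → α) (hf2 : Function.Involutive f) :
    (Sᶜ.filter (fun x => f x ∈ S)).card = (S \ S.filter (fun x => f x ∈ S)).card := by
  refine (Finset.card_bij (fun x _ => f x) ?_ ?_ ?_).symm
  · exact mapsSA S _ _ f hf2 rfl rfl
  · intro a _ b _ hab
    exact hf2.injective hab
  · intro b hb
    exact ⟨f b, mapsB S _ _ f hf2 rfl rfl b hb, hf2 b⟩

def PsiMap (S : Finset α) (k : ℕ)
    (f : {f : α → α // ((∀ x, f x ≠ x) ∧ Function.Involutive f) ∧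
      (S.filter fun x => f x ∈ S).card = 2 * k}) :
    ↥(S.powersetCard (2 * k) ×ˢ Sᶜ.powersetCard (S.card - 2 * k)) :=
  ⟨(S.filter (fun x => f.1 x ∈ S), Sᶜ.filter (fun x => f.1 x ∈ S)), by
    rw [Finset.mem_product]
    constructor
    · exact Finset.mem_powersetCard.mpr ⟨Finset.filter_subset _ _, f.2.2⟩
    · refine Finset.mem_powersetCard.mpr ⟨Finset.filter_subset _ _, ?_⟩
      rw [crossCard S f.1 f.2.1.2, Finset.card_sdiff_of_subset (Finset.filter_subset _ _), f.2.2]⟩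

lemma psi_fiber_card (S : Finset α) (k : ℕ)
    (hN2 : Fintype.card α = 2 * (Fintype.card α / 2))
    (hk : 2 * k ≤ S.card) (hk2 : S.card ≤ Fintype.card α / 2 + k)
    (p : ↥(S.powersetCard (2 * k) ×ˢ Sᶜ.powersetCard (S.card - 2 * k))) :
    Nat.card {f // PsiMap S k f = p} =
      ((2 * k).factorial / (k.factorial * 2 ^ k)) * ((S.card - 2 * k).factorial *
        ((2 * (Fintype.card α / 2 + k - S.card)).factorial /
          ((Fintype.card α / 2 + k - S.card).factorial *
            2 ^ (Fintype.card α / 2 + k - S.card)))) := by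
  classical
  obtain ⟨⟨A, B⟩, hp⟩ := p
  rw [Finset.mem_product] at hp
  obtain ⟨hpA, hpB⟩ := hp
  obtain ⟨hAsub, hAcard⟩ := Finset.mem_powersetCard.mp hpA
  obtain ⟨hBsub, hBcard⟩ := Finset.mem_powersetCard.mp hpB
  have hSle : S.card ≤ Fintype.card α := by
    simpa using Finset.card_le_univ S
  -- step 1: fiber ≃ filter-condition subtype
  have E1 : {f // PsiMap S k f = ⟨(A, B), Finset.mem_product.mpr ⟨hpA, hpB⟩⟩} ≃
      {f : α → α // ((∀ x, f x ≠ x) ∧ Function.Involutive f) ∧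
        S.filter (fun x => f x ∈ S) = A ∧ Sᶜ.filter (fun x => f x ∈ S) = B} := by
    refine ⟨fun x => ⟨x.1.1, x.1.2.1, ?_, ?_⟩, fun y => ⟨⟨y.1, y.2.1, ?_⟩, ?_⟩, ?_, ?_⟩
    · have h := congrArg Subtype.val x.2
      exact congrArg Prod.fst h
    · have h := congrArg Subtype.val x.2
      exact congrArg Prod.snd h
    · rw [y.2.2.1]
      exact hAcard
    · exact Subtype.ext (Prod.ext y.2.2.1 y.2.2.2)
    · intro x
      apply Subtype.ext; apply Subtype.ext; rfl
    · intro y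
      apply Subtype.ext; rfl
  rw [Nat.card_congr (E1.trans (fiberEquiv S A B hAsub hBsub))]
  rw [Nat.card_prod, Nat.card_prod]
  have c1 : Nat.card {fA : α → α // PairingOn A fA} =
      (2 * k).factorial / (k.factorial * 2 ^ k) := card_pairingOn k A hAcard
  have cSA : (S \ A).card = S.card - 2 * k := by
    rw [Finset.card_sdiff_of_subset hAsub, hAcard]
  have c2 : Nat.card (↥(S \ A) ≃ ↥B) = (S.card - 2 * k).factorial := by
    have hcards : Fintype.card ↥(S \ A) = Fintype.card ↥B := by
      rw [Fintype.card_coe, Fintype.card_coe, cSA, hBcard]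
    rw [Nat.card_eq_fintype_card, Fintype.card_equiv (Fintype.equivOfCardEq hcards),
      Fintype.card_coe, cSA]
  have hCcard : (Sᶜ \ B).card = 2 * (Fintype.card α / 2 + k - S.card) := by
    rw [Finset.card_sdiff_of_subset hBsub, Finset.card_compl, hBcard]
    omega
  have c3 : Nat.card {fC : α → α // PairingOn (Sᶜ \ B) fC} =
      (2 * (Fintype.card α / 2 + k - S.card)).factorial /
        ((Fintype.card α / 2 + k - S.card).factorial *
          2 ^ (Fintype.card α / 2 + k - S.card)) :=
    card_pairingOn _ _ hCcard
  rw [c1, c2, c3]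

theorem count_main (S : Finset α) (k : ℕ)
    (hN2 : Fintype.card α = 2 * (Fintype.card α / 2))
    (hk : 2 * k ≤ S.card) (hk2 : S.card ≤ Fintype.card α / 2 + k) :
    Nat.card {f : α → α // ((∀ x, f x ≠ x) ∧ Function.Involutive f) ∧
      (S.filter fun x => f x ∈ S).card = 2 * k} =
    (S.card.choose (2 * k) * (Fintype.card α - S.card).choose (S.card - 2 * k)) *
      (((2 * k).factorial / (k.factorial * 2 ^ k)) * ((S.card - 2 * k).factorial *
        ((2 * (Fintype.card α / 2 + k - S.card)).factorial /
          ((Fintype.card α / 2 + k - S.card).factorial *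
            2 ^ (Fintype.card α / 2 + k - S.card))))) := by
  classical
  rw [← Nat.card_congr (Equiv.sigmaFiberEquiv (PsiMap S k)), nat_card_sigma]
  rw [Finset.sum_congr rfl (fun p _ => psi_fiber_card S k hN2 hk hk2 p)]
  rw [Finset.sum_const, Finset.card_univ, Fintype.card_coe, Finset.card_product,
    Finset.card_powersetCard, Finset.card_powersetCard, Finset.card_compl, smul_eq_mul]
end Pairings3

lemma pairing_dvd (m : ℕ) : (m.factorial * 2 ^ m) ∣ (2 * m).factorial :=
  ⟨Nat.card {f : Fin (2 * m) → Fin (2 * m) // PairingOn (Finset.univ : Finset (Fin (2 * m))) f},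
    by have h := card_pairingOn_mul m (Finset.univ : Finset (Fin (2 * m))) (by simp)
       rw [← h]; ring⟩

lemma TI_card (d n : ℕ) (hd : 0 < d) (I : Finset (Fin n)) : (TI d n I).card = d * I.card := by
  have h : (TI d n I).card = (I ×ˢ (Finset.univ : Finset (Fin d))).card := by
    refine Finset.card_bij'
      (fun x hx => (⟨x.val / d,
          Nat.div_lt_of_lt_mul x.isLt⟩,
        ⟨x.val % d, Nat.mod_lt _ hd⟩))
      (fun p hp => ⟨d * p.1.val + p.2.val, by
          have h1 : p.1.val < n := p.1.isLt
          have h2 : p.2.val < d := p.2.isLt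
          calc d * p.1.val + p.2.val < d * p.1.val + d := by omega
            _ = d * (p.1.val + 1) := by ring
            _ ≤ d * n := Nat.mul_le_mul_left d (by omega)⟩) ?_ ?_ ?_ ?_
    · intro x hx
      rw [Finset.mem_product]
      unfold TI at hx
      rw [Finset.mem_filter] at hx
      obtain ⟨-, i, hi, hdiv⟩ := hx
      constructor
      · have hlt : x.val / d < n := Nat.div_lt_of_lt_mul x.isLt
        have h : (⟨x.val / d, hlt⟩ : Fin n) = i := Fin.ext hdiv
        simpa [h] using hi
      · exact Finset.mem_univ _
    · intro p hp
      rw [Finset.mem_product] at hp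
      unfold TI
      rw [Finset.mem_filter]
      refine ⟨Finset.mem_univ _, p.1, hp.1, ?_⟩
      show (d * p.1.val + p.2.val) / d = p.1.val
      rw [Nat.mul_add_div hd, Nat.div_eq_of_lt p.2.isLt]
      omega
    · intro x hx
      apply Fin.ext
      show d * (x.val / d) + x.val % d = x.val
      exact Nat.div_add_mod x.val d
    · intro p hp
      refine Prod.ext (Fin.ext ?_) (Fin.ext ?_)
      · show (d * p.1.val + p.2.val) / d = p.1.val
        rw [Nat.mul_add_div hd, Nat.div_eq_of_lt p.2.isLt]
        omega
      · show (d * p.1.val + p.2.val) % d = p.2.val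
        rw [Nat.mul_add_mod, Nat.mod_eq_of_lt p.2.isLt]
  rw [h, Finset.card_product, Finset.card_univ, Fintype.card_fin, mul_comm]

/-- The explicit counting formula for `|C_{T_I,k}|`, the number of pairings with
exactly `k` pairs inside a fixed union `T_I` of `t` cells:
`C(dt,2k)·(2k)!/(k!2^k)·C(dn-dt,dt-2k)·(dt-2k)!·(dn-2dt+2k)!/((dn/2-dt+k)!·2^{dn/2-dt+k})`,
for all `k` in the range `max{0, dt - dn/2} ≤ k ≤ dt/2`. -/
theorem stmt4 (d n t k : ℕ) (hd : 0 < d) (hn : 0 < n) (heven : Even (d * n))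
    (ht : t ≤ n) (I : Finset (Fin n)) (hI : I.card = t)
    (hk_low : d * t ≤ d * n / 2 + k) (hk_high : 2 * k ≤ d * t) :
    (Nat.card {f : Equiv.Perm (Fin (d * n)) // IsPairing f ∧ inCount d n I f = 2 * k} : ℚ) =
      ((d * t).choose (2 * k) : ℚ) * ((2 * k).factorial / (k.factorial * 2 ^ k)) *
        ((d * n - d * t).choose (d * t - 2 * k) : ℚ) * ((d * t - 2 * k).factorial : ℚ) *
        ((d * n + 2 * k - 2 * (d * t)).factorial : ℚ) /
        (((d * n / 2 + k - d * t).factorial : ℚ) * 2 ^ (d * n / 2 + k - d * t)) := by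
  classical
  have hdtn : d * t ≤ d * n := Nat.mul_le_mul_left d ht
  have h2 : d * n + 2 * k - 2 * (d * t) = 2 * (d * n / 2 + k - d * t) := by
    obtain ⟨r, hr⟩ := heven
    omega
  set S := TI d n I with hSdef
  have hScard : S.card = d * t := by rw [hSdef, TI_card d n hd I, hI]
  have hcount : ∀ f : Equiv.Perm (Fin (d * n)),
      inCount d n I f = (S.filter (fun x => f x ∈ S)).card := by
    intro f
    unfold inCount
    congr 1
    ext x
    simp [hSdef, Finset.mem_filter]
  have E : {f : Equiv.Perm (Fin (d * n)) // IsPairing f ∧ inCount d n I f = 2 * k} ≃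
      {f : Fin (d * n) → Fin (d * n) // ((∀ x, f x ≠ x) ∧ Function.Involutive f) ∧
        (S.filter fun x => f x ∈ S).card = 2 * k} := by
    refine ⟨fun F => ⟨⇑F.1, ⟨F.2.1.1, F.2.1.2⟩, by rw [← hcount]; exact F.2.2⟩,
      fun G => ⟨Function.Involutive.toPerm G.1 G.2.1.2, ⟨G.2.1.1, G.2.1.2⟩,
        by rw [hcount]; exact G.2.2⟩, ?_, ?_⟩
    · intro F
      apply Subtype.ext
      apply Equiv.ext
      intro x
      rfl
    · intro G
      apply Subtype.ext
      rfl
  rw [Nat.card_congr E]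
  have hN : Fintype.card (Fin (d * n)) = d * n := Fintype.card_fin _
  have hN2 : Fintype.card (Fin (d * n)) = 2 * (Fintype.card (Fin (d * n)) / 2) := by
    obtain ⟨r, hr⟩ := heven
    rw [hN]
    omega
  have hmain := count_main S k hN2 (by rw [hScard]; exact hk_high)
    (by rw [hScard, hN]; exact hk_low)
  rw [hScard, hN] at hmain
  rw [hmain]
  rw [h2]
  set m' := d * n / 2 + k - d * t with hm'
  -- now casting
  have d1 := pairing_dvd k
  have d2 := pairing_dvd m'
  have hne1 : ((k.factorial * 2 ^ k : ℕ) : ℚ) ≠ 0 := by positivity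
  have hne2 : ((m'.factorial * 2 ^ m' : ℕ) : ℚ) ≠ 0 := by positivity
  rw [Nat.cast_mul, Nat.cast_mul, Nat.cast_mul, Nat.cast_mul,
    Nat.cast_div d1 hne1, Nat.cast_div d2 hne2]
  push_cast
  have hf1 : (Nat.factorial k : ℚ) ≠ 0 := by positivity
  have hf2 : (Nat.factorial m' : ℚ) ≠ 0 := by positivity
  field_simp
end

section
/- With f(k) = (1/4) · (1/(k+1)) · (dt - 2k)(dt - 2k + 1)/(dn/2 - dt + k + 1), for any k1 > k2 in the range max{0, dt - dn/2} ≤ k ≤ dt/2, the ratio f(k1)/f(k2) is at most (k2 + 1)/(k1 + 1). -/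
/-!
With `a = dt` and `b = dn/2`, `f(k) = g(k) / (4(k+1))` where
`g(k) = (a - 2k)(a - 2k + 1) / (b - a + k + 1)`, so the claim is `g(k₁) ≤ g(k₂)`.
On `a - b ≤ k ≤ a/2` the numerator of `g` is nonnegative and decreasing while its denominator
is at least `1` and increasing, so `g` is antitone there.
-/

noncomputable def quadRatio (a b k : ℝ) : ℝ :=
  (a - 2 * k) * (a - 2 * k + 1) / (b - a + k + 1)

noncomputable def scaledQuadRatio (a b k : ℝ) : ℝ :=
  1 / 4 * (1 / (k + 1)) * ((a - 2 * k) * (a - 2 * k + 1)) / (b - a + k + 1)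

lemma scaledQuadRatio_eq (a b k : ℝ) :
    scaledQuadRatio a b k = 1 / 4 * (1 / (k + 1)) * quadRatio a b k :=
  mul_div_assoc _ _ _

lemma quadRatio_pos {a b k : ℝ} (hlow : a - b ≤ k) (hhigh : k < a / 2) : 0 < quadRatio a b k := by
  unfold quadRatio
  exact div_pos (mul_pos (by linarith) (by linarith)) (by linarith)

lemma quadRatio_antitoneOn (a b : ℝ) : AntitoneOn (quadRatio a b) (Set.Icc (a - b) (a / 2)) := by
  rintro k₂ ⟨hk₂, -⟩ k₁ ⟨-, hk₁⟩ hle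
  have hnum : (a - 2 * k₁) * (a - 2 * k₁ + 1) ≤ (a - 2 * k₂) * (a - 2 * k₂ + 1) :=
    mul_le_mul (by linarith) (by linarith) (by linarith) (by linarith)
  exact div_le_div₀ (by nlinarith) hnum (by linarith) (by linarith)

lemma scaledQuadRatio_div_le {a b k₁ k₂ : ℝ} (hk₂ : 0 ≤ k₂) (hlow : a - b ≤ k₂)
    (hhigh : k₁ ≤ a / 2) (hlt : k₂ < k₁) :
    scaledQuadRatio a b k₁ / scaledQuadRatio a b k₂ ≤ (k₂ + 1) / (k₁ + 1) := by
  have hmem₁ : k₁ ∈ Set.Icc (a - b) (a / 2) := ⟨by linarith, hhigh⟩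
  have hmem₂ : k₂ ∈ Set.Icc (a - b) (a / 2) := ⟨hlow, by linarith⟩
  have hg₂ : 0 < quadRatio a b k₂ := quadRatio_pos hlow (by linarith)
  have hg : quadRatio a b k₁ ≤ quadRatio a b k₂ := quadRatio_antitoneOn a b hmem₂ hmem₁ hlt.le
  rw [scaledQuadRatio_eq, scaledQuadRatio_eq]
  calc _ = (k₂ + 1) / (k₁ + 1) * (quadRatio a b k₁ / quadRatio a b k₂) := by
          field_simp [show k₁ + 1 ≠ 0 by linarith, show k₂ + 1 ≠ 0 by linarith]
    _ ≤ (k₂ + 1) / (k₁ + 1) :=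
          mul_le_of_le_one_right (div_nonneg (by linarith) (by linarith))
            (div_le_one_of_le₀ hg hg₂.le)

theorem stmt5_general (d t n : ℕ) (k1 k2 : ℝ)
    (hlow : max 0 ((d * t : ℝ) - (d * n : ℝ) / 2) ≤ k2)
    (hhigh : k1 ≤ (d * t : ℝ) / 2) (hlt : k2 < k1) :
    (1 / 4 * (1 / (k1 + 1)) *
        (((d * t : ℝ) - 2 * k1) * ((d * t : ℝ) - 2 * k1 + 1)) /
        ((d * n : ℝ) / 2 - (d * t : ℝ) + k1 + 1)) /
      (1 / 4 * (1 / (k2 + 1)) *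
        (((d * t : ℝ) - 2 * k2) * ((d * t : ℝ) - 2 * k2 + 1)) /
        ((d * n : ℝ) / 2 - (d * t : ℝ) + k2 + 1)) ≤
      (k2 + 1) / (k1 + 1) := by
  obtain ⟨hk2, hk2low⟩ := max_le_iff.mp hlow
  exact scaledQuadRatio_div_le hk2 hk2low hhigh hlt

/-- With `f(k) = (1/4)·(1/(k+1))·(dt-2k)(dt-2k+1)/(dn/2-dt+k+1)`, for any
`k1 > k2` in the range `max{0, dt - dn/2} ≤ k ≤ dt/2`, the ratio `f(k1)/f(k2)`
is at most `(k2+1)/(k1+1)`. -/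
theorem stmt5 (d t n : ℕ) (hd : 0 < d) (ht : 0 < t) (htn : t ≤ n)
    (heven : Even (d * n)) (k1 k2 : ℝ)
    (hlow : max 0 ((d * t : ℝ) - (d * n : ℝ) / 2) ≤ k2)
    (hhigh : k1 ≤ (d * t : ℝ) / 2) (hlt : k2 < k1) :
    (1 / 4 * (1 / (k1 + 1)) *
        (((d * t : ℝ) - 2 * k1) * ((d * t : ℝ) - 2 * k1 + 1)) /
        ((d * n : ℝ) / 2 - (d * t : ℝ) + k1 + 1)) /
      (1 / 4 * (1 / (k2 + 1)) *
        (((d * t : ℝ) - 2 * k2) * ((d * t : ℝ) - 2 * k2 + 1)) /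
        ((d * n : ℝ) / 2 - (d * t : ℝ) + k2 + 1)) ≤
      (k2 + 1) / (k1 + 1) :=
  stmt5_general d t n k1 k2 hlow hhigh hlt
end

section
/- Let k0 = C(dt,2)/(dn-1) and let k' be the unique real solution of f(k') = 1 where f(k) = (1/4)(1/(k+1))(dt-2k)(dt-2k+1)/(dn/2 - dt + k + 1). If t ≤ n/2, then k0 - 1 ≤ k' ≤ k0. -/
/-- Let `k0 = C(dt,2)/(dn-1)` and let `k'` be the (unique) real solution of
`f(k') = 1`, where `f(k) = (1/4)(1/(k+1))(dt-2k)(dt-2k+1)/(dn/2-dt+k+1)`.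
If `t ≤ n/2`, then `k0 - 1 ≤ k' ≤ k0`. -/
theorem stmt6 (d t n : ℕ) (hd : 0 < d) (ht : 0 < t) (h2t : 2 * t ≤ n)
    (heven : Even (d * n)) (k' : ℝ)
    (hk' : 1 / 4 * (1 / (k' + 1)) *
        (((d * t : ℝ) - 2 * k') * ((d * t : ℝ) - 2 * k' + 1)) /
        ((d * n : ℝ) / 2 - (d * t : ℝ) + k' + 1) = 1) :
    ((d * t).choose 2 : ℝ) / ((d * n : ℝ) - 1) - 1 ≤ k' ∧
      k' ≤ ((d * t).choose 2 : ℝ) / ((d * n : ℝ) - 1) := by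
  have hd1 : (1 : ℝ) ≤ d := by exact_mod_cast hd
  have ht1 : (1 : ℝ) ≤ t := by exact_mod_cast ht
  have h2t' : 2 * (t : ℝ) ≤ n := by exact_mod_cast h2t
  have ha1 : (1 : ℝ) ≤ (d : ℝ) * t := by nlinarith
  have hba : 2 * ((d : ℝ) * t) ≤ (d : ℝ) * n := by nlinarith
  have hb1 : (0 : ℝ) < (d : ℝ) * n - 1 := by nlinarith
  have hk1 : k' + 1 ≠ 0 := by
    intro h
    rw [h] at hk'
    simp at hk'
  have hden : (d : ℝ) * n / 2 - (d : ℝ) * t + k' + 1 ≠ 0 := by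
    intro h
    rw [h] at hk'
    simp at hk'
  have heq : 2 * ((d : ℝ) * n + 5) * k' =
      ((d : ℝ) * t) ^ 2 + 5 * ((d : ℝ) * t) - 2 * ((d : ℝ) * n) - 4 := by
    rw [div_eq_one_iff_eq hden] at hk'
    field_simp at hk'
    nlinarith [hk']
  rw [Nat.cast_choose_two]
  push_cast
  constructor
  · rw [sub_le_iff_le_add, div_le_iff₀ hb1]
    nlinarith [heq, sq_nonneg (2 * ((d : ℝ) * t) - (d : ℝ) * n)]
  · rw [le_div_iff₀ hb1]
    nlinarith [heq, sq_nonneg (2 * ((d : ℝ) * t) - (d : ℝ) * n)]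
end

section
/- Suppose a graph G on vertex set V admits a proper t-coloring f of G[V∖U] for some U = {u_1,…,u_k}, and suppose there exist sets I_1,…,I_k of colors, each of size at least 10, such that the union of the color classes ⋃_{i=1}^k {x ∈ N_G(u_i) : f(x) ∈ I_i} is an independent set in G. If moreover G[U] is 10-choosable, then χ(G) ≤ t + 1. -/
/-!
Keep `f` outside `U` but recolour the independent set `S` of selected neighbours with one new
colour `t + 1`. Every neighbour `x ∉ S` of `u ∈ U` has `f x ∉ I u`, so colouring `G[U]` from
`10`-element sublists of the lists `I u ⊆ {1,…,t}` conflicts neither with `f` nor with `t + 1`.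
-/

open Finset

namespace SimpleGraph

variable {V α : Type*} {G : SimpleGraph V}

theorem Colorable.of_forall_mem_finset {s : Finset α} (c : V → α) (hc : ∀ v, c v ∈ s)
    (hproper : ∀ a b, G.Adj a b → c a ≠ c b) : G.Colorable #s := by
  simpa using (Coloring.mk (fun v => (⟨c v, hc v⟩ : s))
    fun hab heq => hproper _ _ hab (congrArg Subtype.val heq)).colorable

open Classical in
noncomputable def patchColoring (U S : Set V) (g f : V → α) (new : α) : V → α :=
  U.piecewise g (S.piecewise (fun _ => new) f)

section patchColoring

variable {U S : Set V} {g f : V → α} {new : α}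

theorem patchColoring_mem {s : Set α} (hg : ∀ u ∈ U, g u ∈ s) (hf : ∀ v ∉ U, f v ∈ s)
    (hnew : new ∈ s) (v : V) : patchColoring U S g f new v ∈ s := by
  unfold patchColoring
  by_cases hvU : v ∈ U
  · simpa [hvU] using hg v hvU
  · by_cases hvS : v ∈ S <;> simp [hvU, hvS, hnew, hf v hvU]

theorem patchColoring_ne_of_mem_of_notMem {a b : V} (ha : a ∈ U) (hb : b ∉ U) (hab : G.Adj a b)
    (hnew : g a ≠ new) (hmeet : ∀ u ∈ U, ∀ x ∉ U, G.Adj u x → g u = f x → x ∈ S) :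
    patchColoring U S g f new a ≠ patchColoring U S g f new b := by
  unfold patchColoring
  by_cases hbS : b ∈ S
  · simpa [ha, hb, hbS] using hnew
  · simpa [ha, hb, hbS] using fun h => hbS (hmeet a ha b hb hab h)

theorem patchColoring_ne_of_adj
    (hg : ∀ a b, a ∈ U → b ∈ U → G.Adj a b → g a ≠ g b)
    (hf : ∀ a b, a ∉ U → b ∉ U → G.Adj a b → f a ≠ f b)
    (hS : G.IsIndepSet S) (hnew_g : ∀ u ∈ U, g u ≠ new) (hnew_f : ∀ v ∉ U, f v ≠ new)
    (hmeet : ∀ u ∈ U, ∀ x ∉ U, G.Adj u x → g u = f x → x ∈ S)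
    {a b : V} (hab : G.Adj a b) :
    patchColoring U S g f new a ≠ patchColoring U S g f new b := by
  by_cases ha : a ∈ U <;> by_cases hb : b ∈ U
  · simpa [patchColoring, ha, hb] using hg a b ha hb hab
  · exact patchColoring_ne_of_mem_of_notMem ha hb hab (hnew_g a ha) hmeet
  · exact (patchColoring_ne_of_mem_of_notMem hb ha hab.symm (hnew_g b hb) hmeet).symm
  · unfold patchColoring
    by_cases haS : a ∈ S <;> by_cases hbS : b ∈ S
    · exact absurd hab (hS haS hbS hab.ne)
    · simpa [ha, hb, haS, hbS] using (hnew_f b hb).symm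
    · simpa [ha, hb, haS, hbS] using hnew_f a ha
    · simpa [ha, hb, haS, hbS] using hf a b ha hb hab

end patchColoring

end SimpleGraph

open SimpleGraph

theorem stmt19_general {V : Type*} (G : SimpleGraph V)
    (t : ℕ) (U : Finset V) (f : V → ℕ)
    (hf_range : ∀ v ∉ U, f v ∈ Finset.Icc 1 t)
    (hf_proper : ∀ a b, a ∉ U → b ∉ U → G.Adj a b → f a ≠ f b)
    (I : V → Finset ℕ)
    (hIcard : ∀ u ∈ U, 10 ≤ (I u).card)
    (hIsub : ∀ u ∈ U, I u ⊆ Finset.Icc 1 t)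
    (hind : ∀ x y, (∃ u ∈ U, G.Adj u x ∧ f x ∈ I u) →
      (∃ u ∈ U, G.Adj u y ∧ f y ∈ I u) → x ≠ y → ¬G.Adj x y)
    (hchoose : ∀ L : V → Finset ℕ, (∀ u ∈ U, (L u).card = 10) →
      ∃ g : V → ℕ, (∀ u ∈ U, g u ∈ L u) ∧
        ∀ a b, a ∈ U → b ∈ U → G.Adj a b → g a ≠ g b) :
    G.Colorable (t + 1) := by
  choose! L hLI hLcard using fun u (hu : u ∈ U) => exists_subset_card_eq (hIcard u hu)
  obtain ⟨g, hgL, hg_proper⟩ := hchoose L hLcard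
  have hgI : ∀ u ∈ U, g u ∈ I u := fun u hu => hLI u hu (hgL u hu)
  have hg_range : ∀ u ∈ U, g u ∈ Icc 1 t := fun u hu => hIsub u hu (hgI u hu)
  set S : Set V := {x | ∃ u ∈ U, G.Adj u x ∧ f x ∈ I u}
  have hS : G.IsIndepSet S := fun x hx y hy => hind x y hx hy
  have hmeet : ∀ u ∈ U, ∀ x ∉ U, G.Adj u x → g u = f x → x ∈ S :=
    fun u hu x _ hux hgf => ⟨u, hu, hux, hgf ▸ hgI u hu⟩
  have hIcc : Icc 1 t ⊆ Icc 1 (t + 1) := Icc_subset_Icc_right t.le_succ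
  have hc_range (v : V) : patchColoring (↑U) S g f (t + 1) v ∈ Icc 1 (t + 1) :=
    mem_coe.1 <| patchColoring_mem (fun u hu => hIcc (hg_range u hu))
      (fun v hv => hIcc (hf_range v hv)) (right_mem_Icc.2 (Nat.le_add_left 1 t)) v
  have hcard : #(Icc 1 (t + 1)) = t + 1 := by simp
  rw [← hcard]
  exact Colorable.of_forall_mem_finset _ hc_range fun a b hab =>
    patchColoring_ne_of_adj hg_proper hf_proper hS
      (fun u hu => (Nat.lt_succ_of_le (mem_Icc.1 (hg_range u hu)).2).ne)
      (fun v hv => (Nat.lt_succ_of_le (mem_Icc.1 (hf_range v hv)).2).ne) hmeet hab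

/-- If `f` is a proper `t`-coloring of `G[V∖U]` (colors in `{1,…,t}`), all
neighbors of vertices of `U` lie outside `U`, there exist color lists
`I_u ⊆ {1,…,t}` of size at least `10` for the vertices `u ∈ U` such that the
union of the selected color classes `⋃_{u∈U} {x ∈ N_G(u) : f(x) ∈ I_u}` is an
independent set of `G`, and `G[U]` is `10`-choosable, then `χ(G) ≤ t+1`. -/
theorem stmt19 {V : Type*} [Fintype V] [DecidableEq V] (G : SimpleGraph V)
    (t : ℕ) (U : Finset V) (f : V → ℕ)
    (hf_range : ∀ v ∉ U, f v ∈ Finset.Icc 1 t)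
    (hf_proper : ∀ a b, a ∉ U → b ∉ U → G.Adj a b → f a ≠ f b)
    (hnbrs : ∀ u ∈ U, ∀ x, G.Adj u x → x ∉ U)
    (I : V → Finset ℕ)
    (hIcard : ∀ u ∈ U, 10 ≤ (I u).card)
    (hIsub : ∀ u ∈ U, I u ⊆ Finset.Icc 1 t)
    (hind : ∀ x y, (∃ u ∈ U, G.Adj u x ∧ f x ∈ I u) →
      (∃ u ∈ U, G.Adj u y ∧ f y ∈ I u) → x ≠ y → ¬G.Adj x y)
    (hchoose : ∀ L : V → Finset ℕ, (∀ u ∈ U, (L u).card = 10) →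
      ∃ g : V → ℕ, (∀ u ∈ U, g u ∈ L u) ∧
        ∀ a b, a ∈ U → b ∈ U → G.Adj a b → g a ≠ g b) :
    G.Colorable (t + 1) :=
  stmt19_general G t U f hf_range hf_proper I hIcard hIsub hind hchoose
end
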